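/- The quotient group ℚ_2ˣ/(ℚ_2ˣ)² of the multiplicative group of the 2-adic numbers by its subgroup of squares is isomorphic to (ℤ/2)³, and the classes of the elements 2, −1, and 5 form a generating set (a basis) of this 𝔽_2-vector space. -/

import Mathlib

noncomputable section

/-- The subgroup of squares `(ℚ_2ˣ)² = {x² : x ∈ ℚ_2ˣ}` of the multiplicative
group of the `2`-adic numbers. -/
def padic2Squares : Subgroup ℚ_[2]ˣ :=
  (powMonoidHom 2 : ℚ_[2]ˣ →* ℚ_[2]ˣ).range

/-- The unit `2` of `ℚ_2`. -/
def unitTwo : ℚ_[2]ˣ := Units.mk0 (2 : ℚ_[2]) (by norm_num)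

/-- The unit `5` of `ℚ_2`. -/
def unitFive : ℚ_[2]ˣ := Units.mk0 (5 : ℚ_[2]) (by norm_num)


open Multiplicative

abbrev Vv := Multiplicative (ZMod 2) × Multiplicative (ZMod 2)

/-- big target -/
abbrev Tt := Multiplicative (ZMod 2) × Multiplicative (ZMod 2) × Multiplicative (ZMod 2)

lemma unitPart_norm (x : ℚ_[2]ˣ) :
    ‖(x : ℚ_[2]) * (2 : ℚ_[2]) ^ (-(x : ℚ_[2]).valuation)‖ = 1 := by
  have hx : (x : ℚ_[2]) ≠ 0 := Units.ne_zero x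
  have h2 : ((2 : ℕ) : ℚ_[2]) = (2 : ℚ_[2]) := by norm_num
  rw [norm_mul, Padic.norm_eq_zpow_neg_valuation hx, ← h2, Padic.norm_p_zpow]
  rw [← zpow_add₀ (by norm_num : ((2:ℕ) : ℝ) ≠ 0)]
  simp

def unitPart (x : ℚ_[2]ˣ) : ℤ_[2] :=
  ⟨(x : ℚ_[2]) * (2 : ℚ_[2]) ^ (-(x : ℚ_[2]).valuation), le_of_eq (unitPart_norm x)⟩

lemma unitPart_isUnit (x : ℚ_[2]ˣ) : IsUnit (unitPart x) :=
  PadicInt.isUnit_iff.mpr (unitPart_norm x)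

lemma unitPart_mul (x y : ℚ_[2]ˣ) : unitPart (x * y) = unitPart x * unitPart y := by
  apply Subtype.ext
  have hx : (x : ℚ_[2]) ≠ 0 := Units.ne_zero x
  have hy : (y : ℚ_[2]) ≠ 0 := Units.ne_zero y
  show ((x*y : ℚ_[2]ˣ) : ℚ_[2]) * (2:ℚ_[2]) ^ (-((x*y : ℚ_[2]ˣ) : ℚ_[2]).valuation)
      = ((x : ℚ_[2]) * _) * ((y : ℚ_[2]) * _)
  rw [Units.val_mul, Padic.valuation_mul hx hy, neg_add,
    zpow_add₀ (by norm_num : (2:ℚ_[2]) ≠ 0)]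
  ring

/-- unit part as an element of `(ZMod (2^3))ˣ` -/
def unitMod8 (x : ℚ_[2]ˣ) : (ZMod (2^3))ˣ :=
  Units.map (PadicInt.toZModPow 3).toMonoidHom (unitPart_isUnit x).unit

lemma unitMod8_coe (x : ℚ_[2]ˣ) :
    (unitMod8 x : ZMod (2^3)) = PadicInt.toZModPow 3 (unitPart x) := rfl

lemma unitMod8_mul (x y : ℚ_[2]ˣ) : unitMod8 (x * y) = unitMod8 x * unitMod8 y := by
  apply Units.ext
  rw [Units.val_mul, unitMod8_coe, unitMod8_coe, unitMod8_coe, unitPart_mul, map_mul]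

/-- the function `(ZMod 8)ˣ → ZMod 2 × ZMod 2` -/
def gfun (u : (ZMod (2^3))ˣ) : Vv :=
  (ofAdd (if (u : ZMod (2^3)).val = 3 ∨ (u : ZMod (2^3)).val = 7 then 1 else 0),
   ofAdd (if (u : ZMod (2^3)).val = 3 ∨ (u : ZMod (2^3)).val = 5 then 1 else 0))

def gHom : (ZMod (2^3))ˣ →* Vv where
  toFun := gfun
  map_one' := by decide
  map_mul' := by decide

lemma gHom_injective1 : ∀ u : (ZMod (2^3))ˣ, gHom u = 1 → u = 1 := by decide

lemma unitPart_one : unitPart 1 = 1 := by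
  apply Subtype.ext
  show ((1:ℚ_[2]ˣ) : ℚ_[2]) * (2:ℚ_[2]) ^ (-((1:ℚ_[2]ˣ) : ℚ_[2]).valuation) = 1
  rw [Units.val_one, Padic.valuation_one, neg_zero, zpow_zero, one_mul]

lemma unitMod8_one : unitMod8 1 = 1 := by
  apply Units.ext
  rw [unitMod8_coe, unitPart_one, map_one, Units.val_one]

def phi : ℚ_[2]ˣ →* Tt where
  toFun x := (ofAdd (((x : ℚ_[2]).valuation : ZMod 2)), gHom (unitMod8 x))
  map_one' := by
    show (ofAdd (((1:ℚ_[2]).valuation : ZMod 2)), gHom (unitMod8 1)) = 1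
    rw [Padic.valuation_one, unitMod8_one, map_one]
    rfl
  map_mul' x y := by
    have hx : (x : ℚ_[2]) ≠ 0 := Units.ne_zero x
    have hy : (y : ℚ_[2]) ≠ 0 := Units.ne_zero y
    show (ofAdd ((((x*y:ℚ_[2]ˣ):ℚ_[2]).valuation : ZMod 2)), gHom (unitMod8 (x*y))) = _
    rw [Prod.mk_mul_mk, Units.val_mul, Padic.valuation_mul hx hy, unitMod8_mul, map_mul,
      Int.cast_add, ofAdd_add]

lemma Tt_sq (t : Tt) : t * t = 1 := by
  obtain ⟨a, b, c⟩ := t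
  show (a*a, b*b, c*c) = (1,1,1)
  revert a b c; decide

lemma sq_is_one : ∀ {x : ℚ_[2]ˣ}, x ∈ padic2Squares → phi x = 1 := by
  rintro _ ⟨t, rfl⟩
  show phi (t^2) = 1
  rw [map_pow, sq]
  exact Tt_sq _

lemma unit_sq_of_mod8 {u : ℤ_[2]} (hu : IsUnit u) (h8 : PadicInt.toZModPow 3 u = 1) :
    ∃ z : ℤ_[2], z ^ 2 = u := by
  have hnorm : ‖u - 1‖ ≤ ((2:ℕ):ℝ) ^ (-(3:ℕ) : ℤ) := by
    rw [PadicInt.norm_le_pow_iff_mem_span_pow, ← PadicInt.ker_toZModPow, RingHom.mem_ker,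
      map_sub, h8, map_one, sub_self]
  have h2norm : ‖((2:ℕ):ℤ_[2])‖ = ((2:ℕ):ℝ)⁻¹ := PadicInt.norm_p
  set F : Polynomial ℤ_[2] := Polynomial.X ^ 2 - Polynomial.C u with hF
  have heval : F.eval 1 = 1 - u := by simp [hF]
  have hderiv : F.derivative.eval 1 = 2 := by
    simp [hF, Polynomial.derivative_sub, Polynomial.derivative_X_pow, one_add_one_eq_two]
  have hlt : ‖F.eval 1‖ < ‖F.derivative.eval 1‖ ^ 2 := by
    rw [heval, hderiv]
    have h2 : ‖(2:ℤ_[2])‖ = (2:ℝ)⁻¹ := by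
      have : ((2:ℕ):ℤ_[2]) = (2:ℤ_[2]) := by norm_num
      rw [← this, h2norm]; norm_num
    calc ‖(1:ℤ_[2]) - u‖ = ‖u - 1‖ := by rw [norm_sub_rev]
      _ ≤ ((2:ℕ):ℝ) ^ (-(3:ℕ) : ℤ) := hnorm
      _ < ((2:ℝ)⁻¹) ^ 2 := by norm_num
      _ = ‖(2:ℤ_[2])‖ ^ 2 := by rw [h2]
  obtain ⟨z, hz, -⟩ := hensels_lemma hlt
  refine ⟨z, ?_⟩
  have : z ^ 2 - u = 0 := by simpa [hF] using hz
  exact sub_eq_zero.mp this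

lemma ker_phi_eq : phi.ker = padic2Squares := by
  apply le_antisymm
  · intro x hx
    have h : phi x = 1 := hx
    have h1 : ofAdd (((x : ℚ_[2]).valuation : ZMod 2)) = 1 := congrArg Prod.fst h
    have h2 : gHom (unitMod8 x) = 1 := congrArg Prod.snd h
    have hU : unitMod8 x = 1 := gHom_injective1 _ h2
    have h8 : PadicInt.toZModPow 3 (unitPart x) = 1 := by
      rw [← unitMod8_coe, hU, Units.val_one]
    obtain ⟨z, hz⟩ := unit_sq_of_mod8 (unitPart_isUnit x) h8
    have hv : (2:ℤ) ∣ (x : ℚ_[2]).valuation := by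
      have : (((x : ℚ_[2]).valuation : ZMod 2)) = 0 := by
        have := congrArg Multiplicative.toAdd h1
        simpa using this
      exact (ZMod.intCast_zmod_eq_zero_iff_dvd _ 2).mp this
    obtain ⟨k, hk⟩ := hv
    have hzq : ((z : ℚ_[2])) ^ 2 = (unitPart x : ℚ_[2]) := by
      rw [← hz]; push_cast; ring
    have hup : (unitPart x : ℚ_[2]) = (x : ℚ_[2]) * (2:ℚ_[2]) ^ (-(x : ℚ_[2]).valuation) := rfl
    have hzne : (z : ℚ_[2]) ≠ 0 := by
      intro h0
      rw [h0] at hzq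
      have : (unitPart x : ℚ_[2]) ≠ 0 := by
        rw [hup]
        exact mul_ne_zero (Units.ne_zero x) (zpow_ne_zero _ (by norm_num))
      simp at hzq
      exact this hzq.symm
    refine ⟨Units.mk0 ((z : ℚ_[2]) * (2:ℚ_[2]) ^ k)
      (mul_ne_zero hzne (zpow_ne_zero _ (by norm_num))), ?_⟩
    apply Units.ext
    show ((z : ℚ_[2]) * (2:ℚ_[2]) ^ k) ^ 2 = (x : ℚ_[2])
    rw [mul_pow, hzq, hup, ← zpow_natCast ((2:ℚ_[2]) ^ k), ← zpow_mul]
    rw [mul_assoc, ← zpow_add₀ (by norm_num : (2:ℚ_[2]) ≠ 0)]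
    have he : -(x : ℚ_[2]).valuation + k * ((2:ℕ):ℤ) = 0 := by push_cast; omega
    rw [he, zpow_zero, mul_one]
  · intro x hx
    exact sq_is_one hx

lemma val_eq_zero {y : ℚ_[2]} (hy : y ≠ 0) (h : ‖y‖ = 1) : y.valuation = 0 := by
  rw [Padic.norm_eq_zpow_neg_valuation hy] at h
  have h2 : ((2:ℕ):ℝ) ^ (-y.valuation) = ((2:ℕ):ℝ) ^ (0:ℤ) := by rw [h]; norm_num
  have := (zpow_right_inj₀ (by norm_num : (0:ℝ) < ((2:ℕ):ℝ)) (by norm_num)).mp h2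
  omega

lemma val_two : (2 : ℚ_[2]).valuation = 1 := by
  have : ((2:ℕ) : ℚ_[2]) = (2 : ℚ_[2]) := by norm_num
  rw [← this]; exact Padic.valuation_p

lemma unitPart_two : unitPart unitTwo = 1 := by
  apply Subtype.ext
  show (2:ℚ_[2]) * (2:ℚ_[2]) ^ (-(2:ℚ_[2]).valuation) = 1
  rw [val_two]
  norm_num

lemma phi_two : phi unitTwo = (ofAdd 1, ofAdd 0, ofAdd 0) := by
  have hm : unitMod8 unitTwo = 1 := by
    apply Units.ext; rw [unitMod8_coe, unitPart_two, map_one, Units.val_one]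
  show (ofAdd (((2:ℚ_[2]).valuation : ZMod 2)), gHom (unitMod8 unitTwo)) = _
  rw [val_two, hm, map_one]
  rfl

lemma val_neg_one : (-1 : ℚ_[2]).valuation = 0 :=
  val_eq_zero (by norm_num) (by rw [norm_neg, norm_one])

lemma unitPart_neg_one : unitPart (-1) = -1 := by
  apply Subtype.ext
  show ((-1:ℚ_[2]ˣ):ℚ_[2]) * (2:ℚ_[2]) ^ (-((-1:ℚ_[2]ˣ):ℚ_[2]).valuation) = -1
  rw [Units.val_neg, Units.val_one, val_neg_one]
  norm_num

lemma phi_neg_one : phi (-1) = (ofAdd 0, ofAdd 1, ofAdd 0) := by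
  have hc : (unitMod8 (-1) : ZMod (2^3)) = -1 := by
    rw [unitMod8_coe, unitPart_neg_one, map_neg, map_one]
  have hg : gHom (unitMod8 (-1)) = (ofAdd 1, ofAdd 0) := by
    show gfun _ = _
    unfold gfun
    rw [hc]
    decide
  show (ofAdd ((((-1:ℚ_[2]ˣ):ℚ_[2]).valuation : ZMod 2)), gHom (unitMod8 (-1))) = _
  rw [Units.val_neg, Units.val_one, val_neg_one, hg]
  rfl

lemma val_five : (5 : ℚ_[2]).valuation = 0 := by
  apply val_eq_zero (by norm_num)
  have h5 : ((5:ℤ) : ℚ_[2]) = (5 : ℚ_[2]) := by norm_num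
  have hle : ‖((5:ℤ) : ℚ_[2])‖ ≤ 1 := Padic.norm_int_le_one 5
  have hlt : ¬ ‖((5:ℤ) : ℚ_[2])‖ < 1 := by
    rw [Padic.norm_intCast_lt_one_iff]
    decide
  rw [← h5]
  exact le_antisymm hle (not_lt.mp hlt)

lemma unitPart_five : unitPart unitFive = 5 := by
  apply Subtype.ext
  show (5:ℚ_[2]) * (2:ℚ_[2]) ^ (-(5:ℚ_[2]).valuation) = ((5:ℤ_[2]) : ℚ_[2])
  rw [val_five]
  push_cast
  norm_num
  rfl

lemma phi_five : phi unitFive = (ofAdd 0, ofAdd 0, ofAdd 1) := by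
  have hc : (unitMod8 unitFive : ZMod (2^3)) = 5 := by
    rw [unitMod8_coe, unitPart_five,
      show (5:ℤ_[2]) = ((5:ℕ):ℤ_[2]) by norm_num, map_natCast]
    norm_num
  have hg : gHom (unitMod8 unitFive) = (ofAdd 0, ofAdd 1) := by
    show gfun _ = _
    unfold gfun
    rw [hc]
    decide
  show (ofAdd (((5:ℚ_[2]).valuation : ZMod 2)), gHom (unitMod8 unitFive)) = _
  rw [val_five, hg]
  rfl

lemma gen_decide : ∀ t : Tt, ∃ v : Fin 2 × Fin 2 × Fin 2,
    t = ((ofAdd 1, ofAdd 0, ofAdd 0) : Tt) ^ (v.1 : ℕ) *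
        ((ofAdd 0, ofAdd 1, ofAdd 0) : Tt) ^ (v.2.1 : ℕ) *
        ((ofAdd 0, ofAdd 0, ofAdd 1) : Tt) ^ (v.2.2 : ℕ) := by decide

lemma phi_surj : Function.Surjective phi := by
  intro t
  obtain ⟨⟨i, j, k⟩, ht⟩ := gen_decide t
  refine ⟨unitTwo ^ (i : ℕ) * (-1) ^ (j : ℕ) * unitFive ^ (k : ℕ), ?_⟩
  rw [map_mul, map_mul, map_pow, map_pow, map_pow, phi_two, phi_neg_one, phi_five, ht]

lemma closure_abc : Subgroup.closure
    ({(ofAdd 1, ofAdd 0, ofAdd 0), (ofAdd 0, ofAdd 1, ofAdd 0),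
      (ofAdd 0, ofAdd 0, ofAdd 1)} : Set Tt) = ⊤ := by
  rw [Subgroup.eq_top_iff']
  intro t
  obtain ⟨⟨i, j, k⟩, ht⟩ := gen_decide t
  rw [ht]
  exact mul_mem (mul_mem (pow_mem (Subgroup.subset_closure (by simp)) _)
    (pow_mem (Subgroup.subset_closure (by simp)) _))
    (pow_mem (Subgroup.subset_closure (by simp)) _)

def eIso : (ℚ_[2]ˣ ⧸ padic2Squares) ≃* Tt :=
  (QuotientGroup.quotientMulEquivOfEq ker_phi_eq.symm).trans
    (QuotientGroup.quotientKerEquivOfSurjective phi phi_surj)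

lemma eIso_mk (x : ℚ_[2]ˣ) : eIso (QuotientGroup.mk x) = phi x := rfl

/-- the group `ℚ_2ˣ/(ℚ_2ˣ)²` is isomorphic to `(ℤ/2)³`, and the
classes of `2`, `−1`, and `5` generate it. -/
theorem padic2_units_mod_squares :
    Nonempty ((ℚ_[2]ˣ ⧸ padic2Squares) ≃*
        (Multiplicative (ZMod 2) × Multiplicative (ZMod 2) × Multiplicative (ZMod 2))) ∧
      Subgroup.closure
        {(QuotientGroup.mk unitTwo : ℚ_[2]ˣ ⧸ padic2Squares),
          QuotientGroup.mk (-1 : ℚ_[2]ˣ), QuotientGroup.mk unitFive} = ⊤ := by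
  refine ⟨⟨eIso⟩, ?_⟩
  have hinj := Subgroup.map_injective (G := ℚ_[2]ˣ ⧸ padic2Squares)
    (f := eIso.toMonoidHom) eIso.injective
  apply hinj
  rw [MonoidHom.map_closure]
  have himg : eIso.toMonoidHom ''
      {(QuotientGroup.mk unitTwo : ℚ_[2]ˣ ⧸ padic2Squares),
        QuotientGroup.mk (-1 : ℚ_[2]ˣ), QuotientGroup.mk unitFive} =
      ({(ofAdd 1, ofAdd 0, ofAdd 0), (ofAdd 0, ofAdd 1, ofAdd 0),
        (ofAdd 0, ofAdd 0, ofAdd 1)} : Set Tt) := by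
    rw [Set.image_insert_eq, Set.image_insert_eq, Set.image_singleton]
    rw [show eIso.toMonoidHom (QuotientGroup.mk unitTwo) = phi unitTwo from rfl,
      show eIso.toMonoidHom (QuotientGroup.mk (-1)) = phi (-1) from rfl,
      show eIso.toMonoidHom (QuotientGroup.mk unitFive) = phi unitFive from rfl,
      phi_two, phi_neg_one, phi_five]
  rw [himg, closure_abc, Subgroup.map_top_of_surjective _ eIso.surjective]
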